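/- Let E be a measurable set of finite measure, 1 < p < ∞, and let (u_n) be a sequence in L^p(E) that converges in measure to a function u and is bounded in the L^p norm by a constant C. Then u ∈ L^p(E) and for every q with 1 ≤ q < p, the sequence u_n converges to u strongly in L^q(E), i.e. lim_{n→∞} ‖u_n − u‖_{L^q(E)} = 0. -/

import Mathlib

/-!
Since `‖f‖ ^ q ≤ M ^ (q - p) * ‖f‖ ^ p` on `{M ≤ ‖f‖}`, a family bounded in `L^p` is uniformly
integrable in `L^q` for every `q < p`, and Vitali's convergence theorem turns convergence in
measure into convergence in `L^q`. The limit lies in `L^p` by Fatou's lemma along an a.e.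
convergent subsequence.
-/

open ENNReal NNReal MeasureTheory Filter

open scoped Topology

section

variable {α β : Type*} [MeasurableSpace α] [NormedAddCommGroup β] {μ : Measure α}

theorem rpow_mul_eLpNorm'_indicator_norm_ge_le (f : α → β) (M : ℝ≥0) {q r : ℝ}
    (hq : 0 < q) (hqr : q ≤ r) :
    (M : ℝ≥0∞) ^ (r - q) * eLpNorm' ({x | M ≤ ‖f x‖₊}.indicator f) q μ ^ q ≤
      eLpNorm' f r μ ^ r := by
  rw [← lintegral_rpow_enorm_eq_rpow_eLpNorm' hq,
    ← lintegral_rpow_enorm_eq_rpow_eLpNorm' (hq.trans_le hqr)]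
  refine (lintegral_const_mul_le _ _).trans (lintegral_mono fun x => ?_)
  by_cases hx : x ∈ {x | M ≤ ‖f x‖₊}
  · rw [Set.indicator_of_mem hx]
    calc (M : ℝ≥0∞) ^ (r - q) * ‖f x‖ₑ ^ q ≤ ‖f x‖ₑ ^ (r - q) * ‖f x‖ₑ ^ q := by
          gcongr
          exact ENNReal.coe_le_coe.2 hx
      _ = ‖f x‖ₑ ^ r := by
          rw [← ENNReal.rpow_add_of_nonneg _ _ (sub_nonneg.2 hqr) hq.le, sub_add_cancel]
  · simp [Set.indicator_of_notMem hx, ENNReal.zero_rpow_of_pos hq]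

theorem unifIntegrable_of_eLpNorm_le_of_lt {ι : Type*} {p q : ℝ≥0∞} (hq : 1 ≤ q) (hqp : q < p)
    (hp : p ≠ ⊤) {f : ι → α → β} (hf : ∀ i, AEStronglyMeasurable (f i) μ) (C : ℝ≥0)
    (hC : ∀ i, eLpNorm (f i) p μ ≤ C) :
    UnifIntegrable f q μ := by
  have hq0 : q ≠ 0 := (zero_lt_one.trans_le hq).ne'
  have hqtop : q ≠ ⊤ := (hqp.trans hp.lt_top).ne
  have hqr : 0 < q.toReal := ENNReal.toReal_pos hq0 hqtop
  have hqpr : q.toReal < p.toReal := ENNReal.toReal_strict_mono hp hqp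
  refine unifIntegrable_of hq hqtop hf fun ε hε => ?_
  obtain ⟨M, hM⟩ : ∃ M : ℝ≥0, (C : ℝ≥0∞) ^ p.toReal <
      (M : ℝ≥0∞) ^ (p.toReal - q.toReal) * ENNReal.ofReal ε ^ q.toReal := by
    have hpow : Tendsto (fun M : ℝ≥0 => (M : ℝ≥0∞) ^ (p.toReal - q.toReal)) atTop (𝓝 ⊤) := by
      have := (ENNReal.continuous_rpow_const (y := p.toReal - q.toReal)).tendsto ⊤
      rw [ENNReal.top_rpow_of_pos (sub_pos.2 hqpr)] at this
      exact this.comp (ENNReal.tendsto_coe_nhds_top.2 tendsto_id)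
    have hεq : ENNReal.ofReal ε ^ q.toReal ≠ 0 := by positivity
    have hlim :=
      ENNReal.Tendsto.mul_const hpow (b := ENNReal.ofReal ε ^ q.toReal) (.inl top_ne_zero)
    rw [ENNReal.top_mul hεq] at hlim
    exact (hlim.eventually (lt_mem_nhds (by finiteness))).exists
  have hM0 : (M : ℝ≥0∞) ^ (p.toReal - q.toReal) ≠ 0 := by
    rintro h
    simp [h] at hM
  refine ⟨M, fun i => (ENNReal.rpow_le_rpow_iff hqr).1 <|
    (ENNReal.mul_le_mul_iff_right hM0 (by finiteness)).1 ?_⟩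
  rw [eLpNorm_eq_eLpNorm' hq0 hqtop]
  calc _ ≤ eLpNorm' (f i) p.toReal μ ^ p.toReal :=
        rpow_mul_eLpNorm'_indicator_norm_ge_le (f i) M hqr hqpr.le
    _ ≤ (C : ℝ≥0∞) ^ p.toReal := by
        rw [← eLpNorm_eq_eLpNorm' (hq0.bot_lt.trans hqp).ne' hp]
        gcongr
        exact hC i
    _ ≤ _ := hM.le

end

theorem stmt0_general {X : Type*} [MeasurableSpace X] (μ : Measure X)
    (E : Set X) (hEfin : μ E < ⊤)
    (p : ℝ≥0∞) (hp2 : p < ⊤)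
    (u : ℕ → X → ℝ) (v : X → ℝ)
    (hum : ∀ n, AEStronglyMeasurable (u n) (μ.restrict E))
    (hvm : AEStronglyMeasurable v (μ.restrict E))
    (hconv : TendstoInMeasure (μ.restrict E) u atTop v)
    (C : ℝ≥0) (hbound : ∀ n, eLpNorm (u n) p (μ.restrict E) ≤ C) :
    MemLp v p (μ.restrict E) ∧
      ∀ q : ℝ≥0∞, 1 ≤ q → q < p →
        Tendsto (fun n => eLpNorm (u n - v) q (μ.restrict E)) atTop (nhds 0) := by
  have : IsFiniteMeasure (μ.restrict E) := isFiniteMeasure_restrict.2 hEfin.ne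
  have hvp : MemLp v p (μ.restrict E) :=
    ⟨hvm, (eLpNorm_le_of_tendstoInMeasure (.of_forall hbound) hconv hum).trans_lt coe_lt_top⟩
  refine ⟨hvp, fun q hq hqp => ?_⟩
  exact tendsto_Lp_finite_of_tendstoInMeasure hq (hqp.trans hp2).ne hum
    (hvp.mono_exponent hqp.le) (unifIntegrable_of_eLpNorm_le_of_lt hq hqp hp2.ne hum C hbound) hconv

/-- Corollary A.2: convergence in measure plus a uniform `L^p` bound on a finite
measure set implies membership in `L^p` and strong convergence in `L^q` for every
`1 ≤ q < p`. -/
theorem stmt0 {X : Type*} [MeasurableSpace X] (μ : Measure X)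
    (E : Set X) (hE : MeasurableSet E) (hEfin : μ E < ⊤)
    (p : ℝ≥0∞) (hp1 : 1 < p) (hp2 : p < ⊤)
    (u : ℕ → X → ℝ) (v : X → ℝ)
    (hum : ∀ n, AEStronglyMeasurable (u n) (μ.restrict E))
    (hvm : AEStronglyMeasurable v (μ.restrict E))
    (hconv : TendstoInMeasure (μ.restrict E) u atTop v)
    (C : ℝ≥0) (hbound : ∀ n, eLpNorm (u n) p (μ.restrict E) ≤ C) :
    MemLp v p (μ.restrict E) ∧
      ∀ q : ℝ≥0∞, 1 ≤ q → q < p →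
        Tendsto (fun n => eLpNorm (u n - v) q (μ.restrict E)) atTop (nhds 0) :=
  stmt0_general μ E hEfin p hp2 u v hum hvm hconv C hbound
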